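/- arXiv:1801.06553 — 6 statements merged into one kernel-verified Lean document; each statement's English description precedes it below -/
import Mathlib

section
/- Let X be a real Hilbert space, a : X × X → ℝ a symmetric continuous coercive bilinear form with coercivity constant α > 0, f : X → ℝ a continuous linear functional, X_N a closed subspace of X, u ∈ X the truth solution satisfying a(u,v) = f(v) for all v ∈ X, u_N ∈ X_N the Galerkin solution satisfying a(u_N,v) = f(v) for all v ∈ X_N, and ê ∈ X the Riesz representative of the residual r(v) = f(v) − a(u_N, v). For any 0 < α_LB ≤ α define the output error estimator Δ^s = ‖ê‖² / α_LB. Then the compliant output error is rigorously bounded: 0 ≤ f(u) − f(u_N) ≤ Δ^s (equivalently, the effectivity η^s = Δ^s / |f(u) − f(u_N)| satisfies η^s ≥ 1 whenever f(u) ≠ f(u_N)). -/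
open scoped RealInnerProductSpace

/-- Rigor of the compliant output error estimator `Δˢ = ‖eHat‖²/α_LB`:
`0 ≤ f u − f u_N ≤ Δˢ`; equivalently the effectivity is at least `1`
whenever `f u ≠ f u_N`. -/
theorem compliant_output_estimator_rigorous
    {X : Type*} [NormedAddCommGroup X] [InnerProductSpace ℝ X] [CompleteSpace X]
    (a : X →ₗ[ℝ] X →ₗ[ℝ] ℝ) (γ α : ℝ) (hγ : 0 < γ) (hα : 0 < α)
    (hsymm : ∀ w v : X, a w v = a v w)
    (hcont : ∀ w v : X, |a w v| ≤ γ * ‖w‖ * ‖v‖)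
    (hcoer : ∀ w : X, α * ‖w‖ ^ 2 ≤ a w w)
    (f : X →L[ℝ] ℝ)
    (X_N : Submodule ℝ X) (hXN : IsClosed (X_N : Set X))
    (u : X) (hu : ∀ v : X, a u v = f v)
    (uN : X) (huN : uN ∈ X_N) (huNsol : ∀ v ∈ X_N, a uN v = f v)
    (eHat : X) (heHat : ∀ v : X, ⟪eHat, v⟫ = f v - a uN v)
    (αLB : ℝ) (hLB0 : 0 < αLB) (hLBα : αLB ≤ α) :
    (0 ≤ f u - f uN ∧ f u - f uN ≤ ‖eHat‖ ^ 2 / αLB) ∧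
    (f u ≠ f uN → 1 ≤ (‖eHat‖ ^ 2 / αLB) / |f u - f uN|) := by
  set e := u - uN with he
  have hfe : (f u : ℝ) - f uN = f e := by simp [he]
  have haNe : a uN e = 0 := by
    rw [hsymm]
    have : a e uN = a u uN - a uN uN := by simp [he, map_sub]
    rw [this, hu uN, huNsol uN huN, sub_self]
  have hae : a e e = f u - f uN := by
    have : a e e = a u e - a uN e := by simp [he, map_sub]; ring
    rw [this, haNe, hu e, hfe, sub_zero]
  have hinner : ⟪eHat, e⟫ = a e e := by
    rw [heHat e, ← hu e]
    simp [he, map_sub]; ring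
  have hcs : a e e ≤ ‖eHat‖ * ‖e‖ := by
    rw [← hinner]; exact real_inner_le_norm eHat e
  have hco : αLB * ‖e‖ ^ 2 ≤ a e e :=
    le_trans (by nlinarith [sq_nonneg ‖e‖]) (hcoer e)
  have hpos : 0 ≤ a e e := le_trans (by positivity) (hcoer e)
  have hub : a e e ≤ ‖eHat‖ ^ 2 / αLB := by
    rw [le_div_iff₀ hLB0]
    nlinarith [norm_nonneg eHat, norm_nonneg e, sq_nonneg (‖eHat‖ - αLB * ‖e‖)]
  have hmain : 0 ≤ f u - f uN ∧ f u - f uN ≤ ‖eHat‖ ^ 2 / αLB :=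
    ⟨hae ▸ hpos, hae ▸ hub⟩
  refine ⟨hmain, fun hne => ?_⟩
  have h0 : 0 < f u - f uN := lt_of_le_of_ne hmain.1 (fun h => hne (by linarith [h.symm]))
  rw [abs_of_pos h0, one_le_div h0]
  exact hmain.2
end

section
/- Let X be a real Hilbert space, a : X × X → ℝ a symmetric continuous coercive bilinear form with constants γ ≥ α > 0, f : X → ℝ a continuous linear functional, X_N a closed subspace of X, u ∈ X the truth solution satisfying a(u,v) = f(v) for all v ∈ X, u_N ∈ X_N the Galerkin solution satisfying a(u_N,v) = f(v) for all v ∈ X_N, and ê ∈ X the Riesz representative of the residual r(v) = f(v) − a(u_N, v). Then ‖ê‖² ≤ γ · a(u − u_N, u − u_N); consequently, for any 0 < α_LB ≤ α the estimator Δ^s = ‖ê‖² / α_LB satisfies the effectivity upper bound Δ^s ≤ (γ / α_LB) · (f(u) − f(u_N)). -/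
open scoped RealInnerProductSpace

/-- Effectivity upper bound for the compliant output error estimator:
`‖eHat‖² ≤ γ·a(u−u_N, u−u_N)` and hence `Δˢ = ‖eHat‖²/α_LB ≤ (γ/α_LB)·(f u − f u_N)`. -/
theorem compliant_output_estimator_effectivity
    {X : Type*} [NormedAddCommGroup X] [InnerProductSpace ℝ X] [CompleteSpace X]
    (a : X →ₗ[ℝ] X →ₗ[ℝ] ℝ) (γ α : ℝ) (hγ : 0 < γ) (hα : 0 < α) (hαγ : α ≤ γ)
    (hsymm : ∀ w v : X, a w v = a v w)
    (hcont : ∀ w v : X, |a w v| ≤ γ * ‖w‖ * ‖v‖)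
    (hcoer : ∀ w : X, α * ‖w‖ ^ 2 ≤ a w w)
    (f : X →L[ℝ] ℝ)
    (X_N : Submodule ℝ X) (hXN : IsClosed (X_N : Set X))
    (u : X) (hu : ∀ v : X, a u v = f v)
    (uN : X) (huN : uN ∈ X_N) (huNsol : ∀ v ∈ X_N, a uN v = f v)
    (eHat : X) (heHat : ∀ v : X, ⟪eHat, v⟫ = f v - a uN v)
    (αLB : ℝ) (hLB0 : 0 < αLB) (hLBα : αLB ≤ α) :
    ‖eHat‖ ^ 2 ≤ γ * a (u - uN) (u - uN) ∧
    ‖eHat‖ ^ 2 / αLB ≤ (γ / αLB) * (f u - f uN) := by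
  set e := u - uN with he
  -- the residual is represented by eHat
  have hae : ∀ v : X, a e v = ⟪eHat, v⟫ := by
    intro v
    rw [he, map_sub, LinearMap.sub_apply, hu v, heHat v]
  -- energy identity : a e e = f u - f uN
  have hCval : a e e = f u - f uN := by
    have h1 : a e uN = 0 := by
      rw [he, map_sub, LinearMap.sub_apply, hu uN, huNsol uN huN, sub_self]
    have h2 : a e u = f u - f uN := by
      rw [he, map_sub, LinearMap.sub_apply, hu u, hsymm uN u, hu uN]
    have : a e e = a e u - a e uN := by
      rw [he]
      simp [map_sub]
    rw [this, h1, h2, sub_zero]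
  -- nonnegativity of the form
  have hpos : ∀ w : X, 0 ≤ a w w := fun w =>
    le_trans (by positivity) (hcoer w)
  have hC0 : 0 ≤ a e e := hpos e
  -- B = a e eHat = ‖eHat‖²
  have hB : a e eHat = ‖eHat‖ ^ 2 := by
    rw [hae eHat, real_inner_self_eq_norm_sq]
  -- A = a eHat eHat ≤ γ ‖eHat‖²
  have hA : a eHat eHat ≤ γ * ‖eHat‖ ^ 2 := by
    have := le_of_abs_le (hcont eHat eHat)
    nlinarith [this]
  -- Cauchy–Schwarz for a via discriminant
  have hquad : ∀ t : ℝ, 0 ≤ a eHat eHat * (t * t) + 2 * a e eHat * t + a e e := by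
    intro t
    have hexp : a (e + t • eHat) (e + t • eHat)
        = a eHat eHat * (t * t) + 2 * a e eHat * t + a e e := by
      have hs : a eHat e = a e eHat := hsymm eHat e
      simp [map_add, map_smul, LinearMap.add_apply, LinearMap.smul_apply,
        smul_eq_mul, hs]
      ring
    have := hpos (e + t • eHat)
    linarith [hexp ▸ this]
  have hdisc : discrim (a eHat eHat) (2 * a e eHat) (a e e) ≤ 0 :=
    discrim_le_zero hquad
  rw [discrim] at hdisc
  have hCS : (a e eHat) ^ 2 ≤ a eHat eHat * a e e := by nlinarith
  -- main bound : ‖eHat‖² ≤ γ a e e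
  have hmain : ‖eHat‖ ^ 2 ≤ γ * a e e := by
    have h4 : (‖eHat‖ ^ 2) ^ 2 ≤ γ * ‖eHat‖ ^ 2 * a e e := by
      calc (‖eHat‖ ^ 2) ^ 2 = (a e eHat) ^ 2 := by rw [hB]
        _ ≤ a eHat eHat * a e e := hCS
        _ ≤ γ * ‖eHat‖ ^ 2 * a e e := mul_le_mul_of_nonneg_right hA hC0
    rcases (sq_nonneg ‖eHat‖).eq_or_lt with h0 | hposn
    · nlinarith [mul_nonneg hγ.le hC0]
    · nlinarith
  refine ⟨hmain, ?_⟩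
  have : ‖eHat‖ ^ 2 ≤ γ * (f u - f uN) := by rw [← hCval]; exact hmain
  rw [div_mul_eq_mul_div]
  gcongr
end

section
/- Let X be a real Hilbert space, a : X × X → ℝ a continuous coercive bilinear form, f, ℓ : X → ℝ continuous linear functionals, u ∈ X the primal truth solution satisfying a(u,v) = f(v) for all v ∈ X, and ψ ∈ X the dual (adjoint) truth solution satisfying a(v, ψ) = −ℓ(v) for all v ∈ X. Let u_N ∈ X and ψ_N ∈ X be arbitrary approximations, and define the primal residual r^pr(v) = f(v) − a(u_N, v) and the primal-dual corrected output s_{N} = ℓ(u_N) − r^pr(ψ_N). Then the output error admits the exact representation ℓ(u) − s_{N} = −a(u − u_N, ψ − ψ_N). -/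
/-- Exact error representation for the primal-dual corrected non-compliant
output: `ℓ(u) − s_N = −a(u − u_N, ψ − ψ_N)`, where
`s_N = ℓ(u_N) − r^pr(ψ_N)` and `r^pr(v) = f(v) − a(u_N, v)`. -/
theorem primal_dual_output_error_representation
    {X : Type*} [NormedAddCommGroup X] [InnerProductSpace ℝ X] [CompleteSpace X]
    (a : X →ₗ[ℝ] X →ₗ[ℝ] ℝ) (γ α : ℝ) (hγ : 0 < γ) (hα : 0 < α)
    (hcont : ∀ w v : X, |a w v| ≤ γ * ‖w‖ * ‖v‖)
    (hcoer : ∀ w : X, α * ‖w‖ ^ 2 ≤ a w w)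
    (f ℓ : X →L[ℝ] ℝ)
    (u : X) (hu : ∀ v : X, a u v = f v)
    (ψ : X) (hψ : ∀ v : X, a v ψ = -ℓ v)
    (uN ψN : X) :
    ℓ u - (ℓ uN - (f ψN - a uN ψN)) = -(a (u - uN) (ψ - ψN)) := by
  have h1 := hψ (u - uN)
  have h2 := hu ψN
  simp only [map_sub, LinearMap.sub_apply] at *
  linarith
end

section
/- Let X be a real Hilbert space, a : X × X → ℝ a symmetric continuous coercive bilinear form with coercivity constant α > 0, f, ℓ : X → ℝ continuous linear functionals, u ∈ X the primal truth solution satisfying a(u,v) = f(v) for all v ∈ X, and ψ ∈ X the dual truth solution satisfying a(v,ψ) = −ℓ(v) for all v ∈ X. Let u_N, ψ_N ∈ X be arbitrary approximations, r^pr(v) = f(v) − a(u_N,v) and r^du(v) = −ℓ(v) − a(v, ψ_N) the primal and dual residuals with Riesz representatives ê^pr and ê^du (⟨ê^pr, v⟩ = r^pr(v), ⟨ê^du, v⟩ = r^du(v) for all v ∈ X), and s_{N} = ℓ(u_N) − r^pr(ψ_N) the primal-dual corrected output. Then for any 0 < α_LB ≤ α, the non-compliant output error estimator Δ^s = (‖ê^pr‖/√α_LB)·(‖ê^du‖/√α_LB)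 is rigorous: |ℓ(u) − s_{N}| ≤ Δ^s. -/
open scoped RealInnerProductSpace

/-- Rigor of the non-compliant output error estimator
`Δˢ = (‖ê^pr‖/√α_LB)·(‖ê^du‖/√α_LB)`: the primal-dual corrected output
`s_N = ℓ(u_N) − r^pr(ψ_N)` satisfies `|ℓ(u) − s_N| ≤ Δˢ`. -/
theorem noncompliant_output_estimator_rigorous
    {X : Type*} [NormedAddCommGroup X] [InnerProductSpace ℝ X] [CompleteSpace X]
    (a : X →ₗ[ℝ] X →ₗ[ℝ] ℝ) (γ α : ℝ) (hγ : 0 < γ) (hα : 0 < α)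
    (hsymm : ∀ w v : X, a w v = a v w)
    (hcont : ∀ w v : X, |a w v| ≤ γ * ‖w‖ * ‖v‖)
    (hcoer : ∀ w : X, α * ‖w‖ ^ 2 ≤ a w w)
    (f ℓ : X →L[ℝ] ℝ)
    (u : X) (hu : ∀ v : X, a u v = f v)
    (ψ : X) (hψ : ∀ v : X, a v ψ = -ℓ v)
    (uN ψN : X)
    (ePr : X) (hePr : ∀ v : X, ⟪ePr, v⟫ = f v - a uN v)
    (eDu : X) (heDu : ∀ v : X, ⟪eDu, v⟫ = -ℓ v - a v ψN)
    (αLB : ℝ) (hLB0 : 0 < αLB) (hLBα : αLB ≤ α) :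
    |ℓ u - (ℓ uN - (f ψN - a uN ψN))| ≤
      (‖ePr‖ / Real.sqrt αLB) * (‖eDu‖ / Real.sqrt αLB) := by
  set e := u - uN with he
  set ε := ψ - ψN with hε
  -- residual identities
  have hae : ∀ v : X, a e v = ⟪ePr, v⟫ := by
    intro v
    rw [he, map_sub, LinearMap.sub_apply, hu v, hePr v]
  have haε : ∀ v : X, a v ε = ⟪eDu, v⟫ := by
    intro v
    rw [hε, map_sub, hψ v, heDu v]
  -- the error in the output equals -(a e ε)
  have key : ℓ u - (ℓ uN - (f ψN - a uN ψN)) = -(a e ε) := by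
    have e1 := hψ u
    have e2 := hψ uN
    have e3 := hu ψN
    have expand : a e ε = a u ψ - a uN ψ - (a u ψN - a uN ψN) := by
      rw [he, hε]
      simp only [map_sub, LinearMap.sub_apply]
    linarith
  rw [key, abs_neg]
  -- positivity of the quadratic form
  have hpos : ∀ v : X, 0 ≤ a v v := by
    intro v
    refine le_trans ?_ (hcoer v)
    positivity
  -- Cauchy–Schwarz for the bilinear form
  have CS : (a e ε) ^ 2 ≤ a e e * a ε ε := by
    have hq : ∀ t : ℝ, 0 ≤ a ε ε * (t * t) + (2 * a e ε) * t + a e e := by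
      intro t
      have h0 := hpos (e + t • ε)
      have hx : a (e + t • ε) (e + t • ε)
          = a ε ε * (t * t) + (2 * a e ε) * t + a e e := by
        simp [map_add, map_smul, smul_eq_mul, hsymm ε e]
        ring
      linarith [hx ▸ h0]
    have hd := discrim_le_zero hq
    rw [discrim] at hd
    nlinarith [hd]
  -- bounds on energy norms of the errors
  have hb1 : αLB * a e e ≤ ‖ePr‖ ^ 2 := by
    have h1 : αLB * ‖e‖ ^ 2 ≤ a e e := by
      refine le_trans ?_ (hcoer e)
      nlinarith [sq_nonneg ‖e‖]
    have h2 : a e e ≤ ‖ePr‖ * ‖e‖ := by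
      rw [hae e]; exact real_inner_le_norm ePr e
    nlinarith [norm_nonneg e, norm_nonneg ePr, hLB0, sq_nonneg (αLB * ‖e‖ - ‖ePr‖)]
  have hb2 : αLB * a ε ε ≤ ‖eDu‖ ^ 2 := by
    have h1 : αLB * ‖ε‖ ^ 2 ≤ a ε ε := by
      refine le_trans ?_ (hcoer ε)
      nlinarith [sq_nonneg ‖ε‖]
    have h2 : a ε ε ≤ ‖eDu‖ * ‖ε‖ := by
      rw [haε ε]; exact real_inner_le_norm eDu ε
    nlinarith [norm_nonneg ε, norm_nonneg eDu, hLB0, sq_nonneg (αLB * ‖ε‖ - ‖eDu‖)]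
  -- combine
  have hRHS : (‖ePr‖ / Real.sqrt αLB) * (‖eDu‖ / Real.sqrt αLB)
      = ‖ePr‖ * ‖eDu‖ / αLB := by
    rw [div_mul_div_comm, Real.mul_self_sqrt hLB0.le]
  rw [hRHS]
  have hR0 : 0 ≤ ‖ePr‖ * ‖eDu‖ / αLB := by positivity
  have hsq : (a e ε) ^ 2 ≤ (‖ePr‖ * ‖eDu‖ / αLB) ^ 2 := by
    have h3 : a e e * a ε ε ≤ (‖ePr‖ ^ 2 / αLB) * (‖eDu‖ ^ 2 / αLB) := by
      have b1 : a e e ≤ ‖ePr‖ ^ 2 / αLB := by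
        rw [le_div_iff₀ hLB0]; linarith
      have b2 : a ε ε ≤ ‖eDu‖ ^ 2 / αLB := by
        rw [le_div_iff₀ hLB0]; linarith
      have hb : 0 ≤ ‖ePr‖ ^ 2 / αLB := by positivity
      exact mul_le_mul b1 b2 (hpos ε) hb
    calc (a e ε) ^ 2 ≤ a e e * a ε ε := CS
      _ ≤ (‖ePr‖ ^ 2 / αLB) * (‖eDu‖ ^ 2 / αLB) := h3
      _ = (‖ePr‖ * ‖eDu‖ / αLB) ^ 2 := by ring
  nlinarith [sq_abs (a e ε), abs_nonneg (a e ε)]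
end

section
/- Let K_1, …, K_Q be real symmetric n×n matrices, Y a real symmetric positive definite n×n matrix, D a parameter set, and θ_q : D → ℝ for q = 1, …, Q; set K(μ) = Σ_{q=1}^{Q} θ_q(μ) K_q and α(μ) = inf over nonzero w ∈ ℝⁿ of wᵀK(μ)w / (wᵀYw). For each q let y_{q,min} = inf over nonzero w of wᵀK_qw/(wᵀYw) and y_{q,max} = sup over nonzero w of wᵀK_qw/(wᵀYw). Then (i) for every nonzero w ∈ ℝⁿ the vector y(w) ∈ ℝ^Q with components y_q(w) = wᵀK_qw/(wᵀYw) satisfies y_{q,min} ≤ y_q(w) ≤ y_{q,max} for all q and Σ_q θ_q(μ') y_q(w) ≥ α(μ') for every μ' ∈ D; and consequently (ii) for every μ ∈ D and every finite subset C ⊆ D, the successive constraint method lower bound α_LB(μ) = inf{ Σ_q θ_q(μ) y_q : y ∈ ℝ^Q, y_{q,min} ≤ y_q ≤ y_{q,max} for all q, and Σ_q θ_q(μ') y_q ≥ α(μ') for all μ' ∈ C } satisfies α_LB(μ) ≤ α(μ). -/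
/-!
Every nonzero `w` gives a feasible point `y(w)` of the SCM linear program: its coordinates are
Rayleigh quotients of the `K q`, hence lie between their infimum and supremum, and by linearity
of the Rayleigh quotient in the matrix, `∑ q, θ q μ' * y q(w)` is the Rayleigh quotient of
`K(μ')`, which is at least `α(μ')`. So the LP objective at `y(w)` is the Rayleigh quotient of
`K(μ)` at `w`: the set whose infimum is `α(μ)` is contained in the set whose infimum is `α_LB(μ)`.
Both infima are genuine because Rayleigh quotients are scale invariant, so their values are
those taken on the compact unit sphere, and the LP objective is continuous on a compact box.
-/

open scoped Matrix

section RayleighQuotient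

variable {ι n : Type*} [Fintype n]

noncomputable def rayleighQuotient (A Y : Matrix n n ℝ) (w : n → ℝ) : ℝ :=
  (w ⬝ᵥ A *ᵥ w) / (w ⬝ᵥ Y *ᵥ w)

def rayleighQuotientSet (A Y : Matrix n n ℝ) : Set ℝ :=
  {r | ∃ w : n → ℝ, w ≠ 0 ∧ r = rayleighQuotient A Y w}

variable (A Y : Matrix n n ℝ)

lemma rayleighQuotient_smul (w : n → ℝ) {c : ℝ} (hc : c ≠ 0) :
    rayleighQuotient A Y (c • w) = rayleighQuotient A Y w := by
  simp only [rayleighQuotient, Matrix.mulVec_smul, smul_dotProduct, dotProduct_smul, smul_eq_mul]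
  rw [mul_div_mul_left _ _ hc, mul_div_mul_left _ _ hc]

lemma rayleighQuotient_sum_smul [Fintype ι] (K : ι → Matrix n n ℝ) (c : ι → ℝ) (w : n → ℝ) :
    rayleighQuotient (∑ q, c q • K q) Y w = ∑ q, c q * rayleighQuotient (K q) Y w := by
  simp only [rayleighQuotient, Matrix.sum_mulVec, Matrix.smul_mulVec, dotProduct_sum,
    dotProduct_smul, smul_eq_mul, Finset.sum_div, mul_div_assoc]

lemma rayleighQuotientSet_subset_image_sphere :
    rayleighQuotientSet A Y ⊆ rayleighQuotient A Y '' Metric.sphere 0 1 := by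
  rintro _ ⟨w, hw, rfl⟩
  have hnorm : ‖w‖ ≠ 0 := norm_ne_zero_iff.mpr hw
  refine ⟨‖w‖⁻¹ • w, ?_, rayleighQuotient_smul A Y w (inv_ne_zero hnorm)⟩
  rw [mem_sphere_zero_iff_norm, norm_smul, norm_inv, norm_norm, inv_mul_cancel₀ hnorm]

lemma rayleighQuotientSet_nonempty [Nonempty n] :
    (rayleighQuotientSet A Y).Nonempty :=
  ⟨_, fun _ => 1, Function.ne_iff.mpr ⟨Classical.arbitrary n, one_ne_zero⟩, rfl⟩

variable {Y}

lemma isCompact_rayleighQuotient_image_sphere (hY : Y.PosDef) :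
    IsCompact (rayleighQuotient A Y '' Metric.sphere 0 1) := by
  have hquad (B : Matrix n n ℝ) : Continuous fun w : n → ℝ => w ⬝ᵥ B *ᵥ w := by
    simp only [dotProduct, Matrix.mulVec]
    fun_prop
  refine (isCompact_sphere 0 1).image_of_continuousOn
    ((hquad A).continuousOn.div (hquad Y).continuousOn fun w hw => ?_)
  have hw0 : w ≠ 0 := ne_zero_of_mem_unit_sphere (⟨w, hw⟩ : Metric.sphere (0 : n → ℝ) 1)
  exact (hY.dotProduct_mulVec_pos hw0).ne'

lemma bddBelow_rayleighQuotientSet (hY : Y.PosDef) : BddBelow (rayleighQuotientSet A Y) :=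
  (isCompact_rayleighQuotient_image_sphere A hY).bddBelow.mono
    (rayleighQuotientSet_subset_image_sphere A Y)

lemma bddAbove_rayleighQuotientSet (hY : Y.PosDef) : BddAbove (rayleighQuotientSet A Y) :=
  (isCompact_rayleighQuotient_image_sphere A hY).bddAbove.mono
    (rayleighQuotientSet_subset_image_sphere A Y)

end RayleighQuotient

theorem scm_lower_bound_general
    {n Q : ℕ} (hn : 0 < n) {D : Type*}
    (K : Fin Q → Matrix (Fin n) (Fin n) ℝ)
    (Y : Matrix (Fin n) (Fin n) ℝ) (hY : Y.PosDef)
    (θ : Fin Q → D → ℝ)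
    (αfun : D → ℝ)
    (hαfun : ∀ μ : D, αfun μ =
      sInf {r : ℝ | ∃ w : Fin n → ℝ, w ≠ 0 ∧
        r = (w ⬝ᵥ (∑ q, θ q μ • K q).mulVec w) / (w ⬝ᵥ Y.mulVec w)})
    (ymin ymax : Fin Q → ℝ)
    (hymin : ∀ q, ymin q = sInf {r : ℝ | ∃ w : Fin n → ℝ, w ≠ 0 ∧
        r = (w ⬝ᵥ (K q).mulVec w) / (w ⬝ᵥ Y.mulVec w)})
    (hymax : ∀ q, ymax q = sSup {r : ℝ | ∃ w : Fin n → ℝ, w ≠ 0 ∧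
        r = (w ⬝ᵥ (K q).mulVec w) / (w ⬝ᵥ Y.mulVec w)}) :
    (∀ w : Fin n → ℝ, w ≠ 0 →
      (∀ q, ymin q ≤ (w ⬝ᵥ (K q).mulVec w) / (w ⬝ᵥ Y.mulVec w) ∧
            (w ⬝ᵥ (K q).mulVec w) / (w ⬝ᵥ Y.mulVec w) ≤ ymax q) ∧
      (∀ μ' : D, αfun μ' ≤
        ∑ q, θ q μ' * ((w ⬝ᵥ (K q).mulVec w) / (w ⬝ᵥ Y.mulVec w)))) ∧
    (∀ (μ : D) (C : Finset D),
      sInf {s : ℝ | ∃ y : Fin Q → ℝ,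
          (∀ q, ymin q ≤ y q ∧ y q ≤ ymax q) ∧
          (∀ μ' ∈ C, αfun μ' ≤ ∑ q, θ q μ' * y q) ∧
          s = ∑ q, θ q μ * y q} ≤ αfun μ) := by
  have : Nonempty (Fin n) := ⟨⟨0, hn⟩⟩
  have box (w : Fin n → ℝ) (hw : w ≠ 0) (q : Fin Q) :
      ymin q ≤ rayleighQuotient (K q) Y w ∧ rayleighQuotient (K q) Y w ≤ ymax q := by
    rw [hymin q, hymax q]
    exact ⟨csInf_le (bddBelow_rayleighQuotientSet _ hY) ⟨w, hw, rfl⟩,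
      le_csSup (bddAbove_rayleighQuotientSet _ hY) ⟨w, hw, rfl⟩⟩
  have constraint (w : Fin n → ℝ) (hw : w ≠ 0) (μ' : D) :
      αfun μ' ≤ ∑ q, θ q μ' * rayleighQuotient (K q) Y w := by
    rw [hαfun μ', ← rayleighQuotient_sum_smul]
    exact csInf_le (bddBelow_rayleighQuotientSet _ hY) ⟨w, hw, rfl⟩
  refine ⟨fun w hw => ⟨box w hw, constraint w hw⟩, fun μ C => ?_⟩
  have hLP : BddBelow {s : ℝ | ∃ y : Fin Q → ℝ,
      (∀ q, ymin q ≤ y q ∧ y q ≤ ymax q) ∧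
      (∀ μ' ∈ C, αfun μ' ≤ ∑ q, θ q μ' * y q) ∧
      s = ∑ q, θ q μ * y q} := by
    have hcompact : IsCompact ((fun y : Fin Q → ℝ => ∑ q, θ q μ * y q) '' Set.Icc ymin ymax) :=
      isCompact_Icc.image (by fun_prop)
    refine hcompact.bddBelow.mono ?_
    rintro _ ⟨y, hy, -, rfl⟩
    exact ⟨y, ⟨fun q => (hy q).1, fun q => (hy q).2⟩, rfl⟩
  rw [hαfun μ]
  refine csInf_le_csInf hLP (rayleighQuotientSet_nonempty _ Y) ?_
  rintro _ ⟨w, hw, rfl⟩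
  exact ⟨_, box w hw, fun μ' _ => constraint w hw μ', rayleighQuotient_sum_smul Y K _ w⟩

/-- The successive constraint method lower bound is a true lower bound for the
discrete coercivity constant: (i) every nonzero `w` produces a feasible point
`y(w)` of the SCM linear program, and (ii) consequently
`α_LB(μ) ≤ α(μ)` for every parameter `μ` and finite constraint sample `C`. -/
theorem scm_lower_bound
    {n Q : ℕ} (hn : 0 < n) {D : Type*}
    (K : Fin Q → Matrix (Fin n) (Fin n) ℝ) (hK : ∀ q, (K q).IsSymm)
    (Y : Matrix (Fin n) (Fin n) ℝ) (hY : Y.PosDef)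
    (θ : Fin Q → D → ℝ)
    (αfun : D → ℝ)
    (hαfun : ∀ μ : D, αfun μ =
      sInf {r : ℝ | ∃ w : Fin n → ℝ, w ≠ 0 ∧
        r = (w ⬝ᵥ (∑ q, θ q μ • K q).mulVec w) / (w ⬝ᵥ Y.mulVec w)})
    (ymin ymax : Fin Q → ℝ)
    (hymin : ∀ q, ymin q = sInf {r : ℝ | ∃ w : Fin n → ℝ, w ≠ 0 ∧
        r = (w ⬝ᵥ (K q).mulVec w) / (w ⬝ᵥ Y.mulVec w)})
    (hymax : ∀ q, ymax q = sSup {r : ℝ | ∃ w : Fin n → ℝ, w ≠ 0 ∧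
        r = (w ⬝ᵥ (K q).mulVec w) / (w ⬝ᵥ Y.mulVec w)}) :
    (∀ w : Fin n → ℝ, w ≠ 0 →
      (∀ q, ymin q ≤ (w ⬝ᵥ (K q).mulVec w) / (w ⬝ᵥ Y.mulVec w) ∧
            (w ⬝ᵥ (K q).mulVec w) / (w ⬝ᵥ Y.mulVec w) ≤ ymax q) ∧
      (∀ μ' : D, αfun μ' ≤
        ∑ q, θ q μ' * ((w ⬝ᵥ (K q).mulVec w) / (w ⬝ᵥ Y.mulVec w)))) ∧
    (∀ (μ : D) (C : Finset D),
      sInf {s : ℝ | ∃ y : Fin Q → ℝ,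
          (∀ q, ymin q ≤ y q ∧ y q ≤ ymax q) ∧
          (∀ μ' ∈ C, αfun μ' ≤ ∑ q, θ q μ' * y q) ∧
          s = ∑ q, θ q μ * y q} ≤ αfun μ) :=
  scm_lower_bound_general hn K Y hY θ αfun hαfun ymin ymax hymin hymax
end

section
/- Let ν ∈ ℝ with 0 ≤ ν < 1, and let G, G_N, Δ_G ∈ ℝ satisfy G ≥ 0, 0 ≤ Δ_G ≤ G_N, and |G_N − G| ≤ Δ_G. Define the truth stress intensity factor SIF = √(G/(1−ν²)), the reduced basis prediction SIF_N = (√(G_N+Δ_G) + √(G_N−Δ_G)) / (2√(1−ν²)), and the estimator Δ_SIF = (√(G_N+Δ_G) − √(G_N−Δ_G)) / (2√(1−ν²)). Then |SIF_N − SIF| ≤ Δ_SIF. -/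
/-! Since `|G_N − G| ≤ Δ_G`, the truth `G` lies in `[G_N − Δ_G, G_N + Δ_G]`, so by monotonicity
`√G` lies in `[√(G_N − Δ_G), √(G_N + Δ_G)]`. `SIF_N` and `Δ_SIF` are the midpoint and the
half-width of that interval scaled by `1 / √(1 − ν²)`, and `SIF = √G / √(1 − ν²)`. -/

lemma abs_midpoint_sub_le_of_mem_Icc {a b x : ℝ} (hax : a ≤ x) (hxb : x ≤ b) :
    |(b + a) / 2 - x| ≤ (b - a) / 2 :=
  abs_le.mpr ⟨by linarith, by linarith⟩

lemma abs_sqrt_midpoint_sub_sqrt_le {a b x : ℝ} (hax : a ≤ x) (hxb : x ≤ b) :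
    |(√b + √a) / 2 - √x| ≤ (√b - √a) / 2 :=
  abs_midpoint_sub_le_of_mem_Icc (Real.sqrt_le_sqrt hax) (Real.sqrt_le_sqrt hxb)

lemma abs_div_two_mul_sub_div_le {u v w s : ℝ} (hs : 0 ≤ s) (h : |u / 2 - v| ≤ w / 2) :
    |u / (2 * s) - v / s| ≤ w / (2 * s) := by
  have hsplit : u / (2 * s) - v / s = (u / 2 - v) / s := by ring
  have hw : w / (2 * s) = w / 2 / s := by ring
  rw [hsplit, hw, abs_div, abs_of_nonneg hs]
  exact div_le_div_of_nonneg_right h hs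

theorem sif_error_bound_general
    (ν G GN ΔG : ℝ)
    (hG : 0 ≤ G)
    (hbound : |GN - G| ≤ ΔG) :
    |(Real.sqrt (GN + ΔG) + Real.sqrt (GN - ΔG)) / (2 * Real.sqrt (1 - ν ^ 2)) -
        Real.sqrt (G / (1 - ν ^ 2))| ≤
      (Real.sqrt (GN + ΔG) - Real.sqrt (GN - ΔG)) / (2 * Real.sqrt (1 - ν ^ 2)) := by
  obtain ⟨hlower, hupper⟩ := abs_le.mp hbound
  rw [Real.sqrt_div hG]
  exact abs_div_two_mul_sub_div_le (Real.sqrt_nonneg _)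
    (abs_sqrt_midpoint_sub_sqrt_le (by linarith) (by linarith))

/-- Rigor of the stress intensity factor error bound derived from a rigorous
energy release rate bound: `|SIF_N − SIF| ≤ Δ_SIF`. -/
theorem sif_error_bound
    (ν G GN ΔG : ℝ) (hν0 : 0 ≤ ν) (hν1 : ν < 1)
    (hG : 0 ≤ G) (hΔG0 : 0 ≤ ΔG) (hΔGN : ΔG ≤ GN)
    (hbound : |GN - G| ≤ ΔG) :
    |(Real.sqrt (GN + ΔG) + Real.sqrt (GN - ΔG)) / (2 * Real.sqrt (1 - ν ^ 2)) -
        Real.sqrt (G / (1 - ν ^ 2))| ≤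
      (Real.sqrt (GN + ΔG) - Real.sqrt (GN - ΔG)) / (2 * Real.sqrt (1 - ν ^ 2)) :=
  sif_error_bound_general ν G GN ΔG hG hbound
end
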